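/- Let k ≥ 4 and let a > b ≥ 0 be integers with (a,b) ≠ (1,0) and b - 3 + 2^a - 2^b ≤ k - 1. Then with n = k + 2^a - 2^b, m = n - 2, n_1 = b - 1 + 2^a - 2^b, m_1 = a - 3 + 2^a - 2^b, the equation F_n^{(k)} - 2^m = F_{n_1}^{(k)} - 2^{m_1} holds, with common value 2^{b-3+2^a-2^b} - 2^{a-3+2^a-2^b}. -/
import Mathlib


/-- The `k`-generalized Fibonacci sequence: `F 0 = 0`, `F 1 = 1`, and each later
term is the sum of the `k` preceding terms (terms with negative index being 0). -/
def genFib (k : ℕ) : ℕ → ℕ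
  | 0 => 0
  | 1 => 1
  | n + 2 => ∑ i ∈ Finset.range k, genFib k (n + 1 - i)
termination_by n => n
decreasing_by omega

lemma genFib_succ (k n : ℕ) :
    genFib k (n + 2) = ∑ i ∈ Finset.range k, genFib k (n + 1 - i) := by
  rw [genFib]

lemma genFib_rec (k n : ℕ) (hk : 1 ≤ k) :
    genFib k (n + 3) + genFib k (n + 2 - k) = 2 * genFib k (n + 2) := by
  obtain ⟨m, rfl⟩ : ∃ m, k = m + 1 := ⟨k - 1, by omega⟩
  have h1 : genFib (m+1) (n + 3) = ∑ i ∈ Finset.range (m+1), genFib (m+1) (n + 2 - i) := by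
    simpa using genFib_succ (m+1) (n+1)
  have h2 := genFib_succ (m+1) n
  rw [Finset.sum_range_succ] at h2
  rw [h1, Finset.sum_range_succ']
  have h3 : n + 2 - (m + 1) = n + 1 - m := by omega
  have h4 : ∀ i, n + 2 - (i + 1) = n + 1 - i := fun i => by omega
  simp only [h4, h3, Nat.sub_zero]
  rw [h2]
  ring

lemma genFib_pow (k n : ℕ) (hk : 2 ≤ k) (hn : n ≤ k - 1) :
    genFib k (n + 2) = 2 ^ n := by
  induction n with
  | zero =>
    rw [genFib_succ]
    obtain ⟨m, rfl⟩ : ∃ m, k = m + 1 := ⟨k - 1, by omega⟩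
    rw [Finset.sum_range_succ']
    simp [genFib]
  | succ n ih =>
    have h := genFib_rec k n (by omega)
    have h0 : n + 2 - k = 0 := by omega
    rw [h0, show genFib k 0 = 0 from by rw [genFib]] at h
    rw [ih (by omega)] at h
    have : genFib k (n + 1 + 2) = genFib k (n + 3) := by norm_num
    rw [this, pow_succ]
    linarith

lemma genFib_upper (k : ℕ) (hk : 4 ≤ k) :
    ∀ j, j ≤ k → (4 : ℤ) * (genFib k (k + 2 + j) : ℤ)
      = 2 ^ (k + j + 2) - ((j : ℤ) + 2) * 2 ^ (j + 1) := by
  intro j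
  induction j with
  | zero =>
    intro _
    simp only [Nat.add_zero]
    have h := genFib_rec k (k - 1) (by omega)
    rw [show k - 1 + 3 = k + 2 from by omega, show k - 1 + 2 - k = 1 from by omega,
      show genFib k 1 = 1 from by rw [genFib],
      genFib_pow k (k - 1) (by omega) (by omega)] at h
    have hZ : (genFib k (k + 2) : ℤ) + 1 = 2 * 2 ^ (k - 1) := by exact_mod_cast h
    have h2 : (2 : ℤ) ^ (k + 2) = 8 * 2 ^ (k - 1) := by
      rw [show k + 2 = (k - 1) + 3 from by omega]; ring
    push_cast
    linear_combination 4 * hZ - h2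
  | succ j ih =>
    intro hj
    have hrec := genFib_rec k (k + j) (by omega)
    rw [show k + j + 2 - k = j + 2 from by omega,
      genFib_pow k j (by omega) (by omega),
      show k + j + 3 = k + 2 + (j + 1) from by omega,
      show k + j + 2 = k + 2 + j from by omega] at hrec
    have ihh := ih (by omega)
    have hrecZ : (genFib k (k + 2 + (j + 1)) : ℤ) + 2 ^ j
        = 2 * (genFib k (k + 2 + j) : ℤ) := by exact_mod_cast hrec
    push_cast
    linear_combination 2 * ihh + 4 * hrecZ

theorem pillai_family_iib (k a b : ℕ) (hk : 4 ≤ k) (hab : b < a) (hne : (a, b) ≠ (1, 0))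
    (hle : (b : ℤ) - 3 + 2 ^ a - 2 ^ b ≤ (k : ℤ) - 1) :
    (genFib k (k + 2 ^ a - 2 ^ b) : ℤ) - 2 ^ (k + 2 ^ a - 2 ^ b - 2) =
      (genFib k (2 ^ a - 2 ^ b + b - 1) : ℤ) - 2 ^ (2 ^ a - 2 ^ b + a - 3) ∧
    (genFib k (2 ^ a - 2 ^ b + b - 1) : ℤ) - 2 ^ (2 ^ a - 2 ^ b + a - 3) =
      2 ^ (2 ^ a - 2 ^ b + b - 3) - 2 ^ (2 ^ a - 2 ^ b + a - 3) := by
  have hb1 : 1 ≤ 2 ^ b := Nat.one_le_two_pow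
  obtain ⟨c, hc⟩ : ∃ c, 2 ^ a = 2 ^ b + c :=
    ⟨2 ^ a - 2 ^ b, by
      have : 2 ^ b < 2 ^ a := Nat.pow_lt_pow_right (by norm_num) hab
      omega⟩
  have hne' : ¬(a = 1 ∧ b = 0) := by
    rintro ⟨h1, h2⟩; exact hne (by simp [h1, h2])
  have hc2 : 2 ≤ c ∧ 3 ≤ b + c := by
    rcases Nat.eq_zero_or_pos b with hb | hb
    · subst hb
      have ha2 : 2 ≤ a := by omega
      have h4 : 2 ^ 2 ≤ 2 ^ a := Nat.pow_le_pow_right (by norm_num) ha2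
      simp only [pow_zero] at hc
      constructor <;> omega
    · have hb2 : 2 ≤ 2 ^ b := by
        calc 2 = 2 ^ 1 := rfl
          _ ≤ 2 ^ b := Nat.pow_le_pow_right (by norm_num) hb
      have hx : 2 ^ (b + 1) ≤ 2 ^ a := Nat.pow_le_pow_right (by norm_num) (by omega)
      rw [pow_succ] at hx
      constructor <;> omega
  obtain ⟨hc2, hbc3⟩ := hc2
  obtain ⟨q, rfl⟩ : ∃ q, c = q + 2 := ⟨c - 2, by omega⟩
  -- translate the size hypothesis
  have hcZ : (2 : ℤ) ^ a = 2 ^ b + (q + 2) := by exact_mod_cast hc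
  have hsize : b + q + 2 ≤ k + 2 := by
    have : (b : ℤ) + (q + 2) ≤ k + 2 := by linarith [hle, hcZ]
    exact_mod_cast this
  obtain ⟨r, hr⟩ : ∃ r, b + q = r + 1 := ⟨b + q - 1, by omega⟩
  obtain ⟨s, hs⟩ : ∃ s, a + q = s + 1 := ⟨a + q - 1, by omega⟩
  rw [hc]
  set p := 2 ^ b with hp
  rw [show k + (p + (q + 2)) - p - 2 = k + q from by omega,
    show k + (p + (q + 2)) - p = k + 2 + q from by omega,
    show p + (q + 2) - p + b - 1 = r + 2 from by omega,
    show p + (q + 2) - p + a - 3 = s from by omega,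
    show p + (q + 2) - p + b - 3 = r from by omega]
  rw [genFib_pow k r (by omega) (by omega)]
  have hB := genFib_upper k hk q (by omega)
  push_cast at hB
  have hd : (2 : ℤ) ^ (s + 1) - 2 ^ (r + 1) = ((q : ℤ) + 2) * 2 ^ q := by
    rw [show s + 1 = a + q from hs.symm, show r + 1 = b + q from hr.symm,
      pow_add, pow_add, hcZ]
    ring
  constructor
  · push_cast
    have h4 : (4 : ℤ) * (genFib k (k + 2 + q) : ℤ)
        = 4 * (2 ^ (k + q) + 2 ^ r - 2 ^ s) := by
      linear_combination hB + 2 * hd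
    linarith
  · push_cast
    ring
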